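/- With A, ⟨,⟩, ∇, H as above (dH = (1/2)⟨c(∇)∧c(∇)⟩), let ∇' = ∇ + A' be another connection on A (A' ∈ Ω¹_X ⊗ g) and ∇̂'(ξ) = −(1/2)⟨A'(ξ), A'(•)⟩ + A'(ξ) + ξ the induced connection on Â_{∇,H}. Then its relative curvature is c_rel(∇̂') = H + ⟨c(∇) ∧ A'⟩ + (1/2)⟨[∇,A'] ∧ A'⟩ + (1/6)⟨[A',A'] ∧ A'⟩. -/

import Mathlib

noncomputable section

/-- The "vector fields" on the algebraic model of the space with function ring `O`. -/
abbrev Vec (O : Type*) [CommRing O] [Algebra ℂ O] := Derivation ℂ O O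

/-- Algebraic model of a Courant `O`-algebroid: an `O`-module `Q` equipped with a
Leibniz bracket, an `O`-linear anchor into vector fields, a symmetric `O`-bilinear
pairing, and a derivation `∂ : O → Q`, subject to the Courant axioms. -/
structure CourantAlgebroid (O : Type*) [CommRing O] [Algebra ℂ O]
    (Q : Type*) [AddCommGroup Q] [Module O Q] where
  bracket : Q → Q → Q
  bracket_add_left : ∀ q₁ q₂ q₃, bracket (q₁ + q₂) q₃ = bracket q₁ q₃ + bracket q₂ q₃
  bracket_add_right : ∀ q₁ q₂ q₃, bracket q₁ (q₂ + q₃) = bracket q₁ q₂ + bracket q₁ q₃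
  anchor : Q →ₗ[O] Vec O
  pair : Q →ₗ[O] Q →ₗ[O] O
  pair_symm : ∀ q₁ q₂, pair q₁ q₂ = pair q₂ q₁
  par : O → Q
  par_add : ∀ f g, par (f + g) = par f + par g
  par_mul : ∀ f g, par (f * g) = f • par g + g • par f
  anchor_par : ∀ f, anchor (par f) = 0
  anchor_bracket : ∀ q₁ q₂, anchor (bracket q₁ q₂) = ⁅anchor q₁, anchor q₂⁆
  jacobi : ∀ q q₁ q₂, bracket q (bracket q₁ q₂)
      = bracket (bracket q q₁) q₂ + bracket q₁ (bracket q q₂)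
  leibniz : ∀ (q₁ q₂ : Q) (f : O), bracket q₁ (f • q₂) = f • bracket q₁ q₂ + anchor q₁ f • q₂
  invar : ∀ q q₁ q₂, pair (bracket q q₁) q₂ + pair q₁ (bracket q q₂)
      = anchor q (pair q₁ q₂)
  bracket_par : ∀ (q : Q) (f : O), bracket q (par f) = par (anchor q f)
  pair_par : ∀ (q : Q) (f : O), pair q (par f) = anchor q f
  symm_bracket : ∀ q₁ q₂, bracket q₁ q₂ + bracket q₂ q₁ = par (pair q₁ q₂)

/-- `Ω_Q`: the `O`-submodule of `Q` generated by the image of the derivation `∂`. -/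
def CourantAlgebroid.Omega {O : Type*} [CommRing O] [Algebra ℂ O]
    {Q : Type*} [AddCommGroup Q] [Module O Q] (C : CourantAlgebroid O Q) : Submodule O Q :=
  Submodule.span O (Set.range C.par)

/-- Algebraic model of a Lie `O`-algebroid. -/
structure LieAlgebroid (O : Type*) [CommRing O] [Algebra ℂ O]
    (A : Type*) [AddCommGroup A] [Module O A] where
  bracket : A → A → A
  bracket_add_left : ∀ a b c, bracket (a + b) c = bracket a c + bracket b c
  bracket_add_right : ∀ a b c, bracket a (b + c) = bracket a b + bracket a c
  anchor : A →ₗ[O] Vec O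
  skew : ∀ a b, bracket a b = - bracket b a
  jacobi : ∀ a b c, bracket a (bracket b c) = bracket (bracket a b) c + bracket b (bracket a c)
  anchor_bracket : ∀ a b, anchor (bracket a b) = ⁅anchor a, anchor b⁆
  leibniz : ∀ (a b : A) (f : O), bracket a (f • b) = f • bracket a b + anchor a f • b

section Model

variable {O : Type*} [CommRing O] [Algebra ℂ O]
variable {A : Type*} [AddCommGroup A] [Module O A]

/-- The curvature `c(∇)(ξ,η) = [∇ξ,∇η] - ∇[ξ,η]` of a connection on a Lie
algebroid. -/
def curvA (L : LieAlgebroid O A) (nb : Vec O →ₗ[O] A) (ξ η : Vec O) : A :=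
  L.bracket (nb ξ) (nb η) - nb ⁅ξ, η⁆

/-- The Koszul formula for the exterior derivative of a `3`-form. -/
def koszulD3 (H : Vec O → Vec O → Vec O → O) (ξ₀ ξ₁ ξ₂ ξ₃ : Vec O) : O :=
  ξ₀ (H ξ₁ ξ₂ ξ₃) - ξ₁ (H ξ₀ ξ₂ ξ₃) + ξ₂ (H ξ₀ ξ₁ ξ₃) - ξ₃ (H ξ₀ ξ₁ ξ₂)
    - H ⁅ξ₀, ξ₁⁆ ξ₂ ξ₃ + H ⁅ξ₀, ξ₂⁆ ξ₁ ξ₃ - H ⁅ξ₀, ξ₃⁆ ξ₁ ξ₂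
    - H ⁅ξ₁, ξ₂⁆ ξ₀ ξ₃ + H ⁅ξ₁, ξ₃⁆ ξ₀ ξ₂ - H ⁅ξ₂, ξ₃⁆ ξ₀ ξ₁

/-- A 3-form as an `O`-multilinear alternating function. -/
def IsForm3 (H : Vec O → Vec O → Vec O → O) : Prop :=
  (∀ ξ ξ' η ζ, H (ξ + ξ') η ζ = H ξ η ζ + H ξ' η ζ)
  ∧ (∀ (f : O) ξ η ζ, H (f • ξ) η ζ = f * H ξ η ζ)
  ∧ (∀ ξ η ζ, H ξ η ζ = - H η ξ ζ)
  ∧ (∀ ξ η ζ, H ξ η ζ = - H ξ ζ η)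

/-- The first Pontryagin form `⟨c(∇) ∧ c(∇)⟩` of a connection. -/
def pontForm (L : LieAlgebroid O A) (P : A →ₗ[O] A →ₗ[O] O)
    (nb : Vec O →ₗ[O] A) (ξ₀ ξ₁ ξ₂ ξ₃ : Vec O) : O :=
  2 * (P (curvA L nb ξ₀ ξ₁) (curvA L nb ξ₂ ξ₃)
      - P (curvA L nb ξ₀ ξ₂) (curvA L nb ξ₁ ξ₃)
      + P (curvA L nb ξ₀ ξ₃) (curvA L nb ξ₁ ξ₂))

/-- The model `Â_{∇,H} = Ω¹ ⊕ g ⊕ T`: one-forms are modelled as `O`-valued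
functions on vector fields, and the `g`-component lives in `A` (constrained to
`ker π_A`). -/
def modelPair (P : A →ₗ[O] A →ₗ[O] O)
    (x y : (Vec O → O) × A × Vec O) : O :=
  x.1 y.2.2 + y.1 x.2.2 + P x.2.1 y.2.1

/-- The derivation of the model: `∂f = df`. -/
def modelPar (f : O) : (Vec O → O) × A × Vec O :=
  (fun ξ => ξ f, 0, 0)

/-- The Leibniz bracket `[,]_{∇,H}` of the model `Â_{∇,H}`, determined by the
standard generator formulas, the Leibniz rule and the symmetry relation. -/
def modelBracket (L : LieAlgebroid O A) (P : A →ₗ[O] A →ₗ[O] O)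
    (nb : Vec O →ₗ[O] A) (H : Vec O → Vec O → Vec O → O)
    (x y : (Vec O → O) × A × Vec O) : (Vec O → O) × A × Vec O :=
  ( fun η =>
      -- Lie derivative term `L_{ξ₁} α₂`
      (x.2.2 (y.1 η) - y.1 ⁅x.2.2, η⁆)
      -- `- ι_{ξ₂} dα₁`
      - (y.2.2 (x.1 η) - η (x.1 y.2.2) - x.1 ⁅y.2.2, η⁆)
      -- `⟨[∇(•), a₁], a₂⟩`
      + P (L.bracket (nb η) x.2.1) y.2.1
      -- `- ⟨c(∇)(ξ₁, •), a₂⟩ + ⟨c(∇)(ξ₂, •), a₁⟩`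
      - P (curvA L nb x.2.2 η) y.2.1
      + P (curvA L nb y.2.2 η) x.2.1
      -- `H(ξ₁, ξ₂, •)`
      + H x.2.2 y.2.2 η ,
    L.bracket x.2.1 y.2.1 + L.bracket (nb x.2.2) y.2.1
      - L.bracket (nb y.2.2) x.2.1 + curvA L nb x.2.2 y.2.2 ,
    ⁅x.2.2, y.2.2⁆ )

end Model

section
variable {O : Type*} [CommRing O] [Algebra ℂ O]
variable {A : Type*} [AddCommGroup A] [Module O A]

/-- The covariant exterior derivative `[∇, A']` of a `g`-valued one-form. -/
def covD (L : LieAlgebroid O A) (nb : Vec O →ₗ[O] A) (Am : Vec O → A)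
    (ξ η : Vec O) : A :=
  L.bracket (nb ξ) (Am η) - L.bracket (nb η) (Am ξ) - Am ⁅ξ, η⁆

/-- The lift `∇̂'(ξ) = -(1/2)⟨A'(ξ),A'(•)⟩ + A'(ξ) + ξ` of the connection
`∇' = ∇ + A'` to the model `Â_{∇,H}`. -/
def liftedConn (P : A →ₗ[O] A →ₗ[O] O) (Am : Vec O → A) (ξ : Vec O) :
    (Vec O → O) × A × Vec O :=
  (fun η => algebraMap ℂ O (-(1/2)) * P (Am ξ) (Am η), Am ξ, ξ)

end

/-! The one-form part `-(1/2)⟨A'(ξ), A'(•)⟩` of the lift is differentiated by the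
derivations `ξᵢ`; invariance of `⟨,⟩` turns `ξ⟨a, b⟩` into `⟨[∇ξ, a], b⟩ + ⟨[∇ξ, b], a⟩`, and
these terms combine with the `g`-component `[∇ξ₀, A'ξ₁] - [∇ξ₁, A'ξ₀]` of the bracket into
`(1/2)⟨[∇, A'] ∧ A'⟩`. On `ker π` the cubic `⟨[a, b], c⟩` is totally antisymmetric, so its
alternation is six times `⟨[A'ξ₀, A'ξ₁], A'ξ₂⟩`. -/

theorem algebraMap_one_div_ofNat_mul {K R : Type*} [Field K] [CharZero K] [Semiring R]
    [Algebra K R] (n : ℕ) [n.AtLeastTwo] :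
    algebraMap K R (1 / ofNat(n)) * ofNat(n) = 1 := by
  rw [← map_ofNat (algebraMap K R) n, ← map_mul, one_div_mul_cancel (NeZero.ne _), map_one]

section InvariantPairing

variable {O : Type*} [CommRing O] [Algebra ℂ O]
variable {A : Type*} [AddCommGroup A] [Module O A]

theorem apply_pair_eq_of_anchor_eq_zero (L : LieAlgebroid O A) (P : A →ₗ[O] A →ₗ[O] O)
    (P_symm : ∀ a b, P a b = P b a)
    (P_invar : ∀ a b c : A, L.anchor b = 0 → L.anchor c = 0 →
      L.anchor a (P b c) = P (L.bracket a b) c + P b (L.bracket a c))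
    (nb : Vec O →ₗ[O] A) (hconn : ∀ ξ, L.anchor (nb ξ) = ξ)
    {b c : A} (hb : L.anchor b = 0) (hc : L.anchor c = 0) (ξ : Vec O) :
    ξ (P b c) = P (L.bracket (nb ξ) b) c + P (L.bracket (nb ξ) c) b := by
  rw [P_symm (L.bracket (nb ξ) c), ← P_invar _ _ _ hb hc, hconn]

theorem pair_bracket_swap_of_anchor_eq_zero (L : LieAlgebroid O A) (P : A →ₗ[O] A →ₗ[O] O)
    (P_symm : ∀ a b, P a b = P b a)
    (P_invar : ∀ a b c : A, L.anchor b = 0 → L.anchor c = 0 →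
      L.anchor a (P b c) = P (L.bracket a b) c + P b (L.bracket a c))
    {a b c : A} (ha : L.anchor a = 0) (hb : L.anchor b = 0) (hc : L.anchor c = 0) :
    P (L.bracket a b) c = - P (L.bracket a c) b := by
  have h := P_invar a b c hb hc
  rw [ha, Derivation.zero_apply, P_symm b] at h
  exact eq_neg_of_add_eq_zero_left h.symm

theorem pair_bracket_cyclic_of_anchor_eq_zero (L : LieAlgebroid O A) (P : A →ₗ[O] A →ₗ[O] O)
    (P_symm : ∀ a b, P a b = P b a)
    (P_invar : ∀ a b c : A, L.anchor b = 0 → L.anchor c = 0 →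
      L.anchor a (P b c) = P (L.bracket a b) c + P b (L.bracket a c))
    {a b c : A} (ha : L.anchor a = 0) (hb : L.anchor b = 0) (hc : L.anchor c = 0) :
    P (L.bracket b c) a = P (L.bracket a b) c := by
  rw [pair_bracket_swap_of_anchor_eq_zero L P P_symm P_invar hb hc ha, L.skew b a, map_neg,
    LinearMap.neg_apply, neg_neg]

theorem one_sixth_mul_alternation_pair_bracket (L : LieAlgebroid O A) (P : A →ₗ[O] A →ₗ[O] O)
    (P_symm : ∀ a b, P a b = P b a)
    (P_invar : ∀ a b c : A, L.anchor b = 0 → L.anchor c = 0 →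
      L.anchor a (P b c) = P (L.bracket a b) c + P b (L.bracket a c))
    {a b c : A} (ha : L.anchor a = 0) (hb : L.anchor b = 0) (hc : L.anchor c = 0) :
    algebraMap ℂ O (1/6) *
        (2 * (P (L.bracket a b) c - P (L.bracket a c) b + P (L.bracket b c) a))
      = P (L.bracket a b) c := by
  rw [pair_bracket_swap_of_anchor_eq_zero L P P_symm P_invar ha hc hb,
    pair_bracket_cyclic_of_anchor_eq_zero L P P_symm P_invar ha hb hc]
  linear_combination P (L.bracket a b) c * algebraMap_one_div_ofNat_mul (K := ℂ) (R := O) 6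

theorem liftedConn_eq (P : A →ₗ[O] A →ₗ[O] O) (P_symm : ∀ a b, P a b = P b a)
    (Am : Vec O → A) (ξ : Vec O) :
    liftedConn P Am ξ = (fun η => -(algebraMap ℂ O (1/2) * P (Am η) (Am ξ)), Am ξ, ξ) := by
  simp only [liftedConn, map_neg, neg_mul, P_symm (Am ξ)]

end InvariantPairing

theorem relative_curvature_change_of_connection_general
    (O : Type*) [CommRing O] [Algebra ℂ O]
    (A : Type*) [AddCommGroup A] [Module O A]
    (L : LieAlgebroid O A)
    (P : A →ₗ[O] A →ₗ[O] O)
    (P_symm : ∀ a b, P a b = P b a)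
    (P_invar : ∀ a b c : A, L.anchor b = 0 → L.anchor c = 0 →
      L.anchor a (P b c) = P (L.bracket a b) c + P b (L.bracket a c))
    (nb : Vec O →ₗ[O] A)
    (hconn : ∀ ξ, L.anchor (nb ξ) = ξ)
    (H : Vec O → Vec O → Vec O → O)
    (Am : Vec O → A)
    (hAm_g : ∀ ξ, L.anchor (Am ξ) = 0) :
    ∀ ξ₀ ξ₁ ξ₂ : Vec O,
      modelPair P (modelBracket L P nb H (liftedConn P Am ξ₀) (liftedConn P Am ξ₁))
        (liftedConn P Am ξ₂)
      = H ξ₀ ξ₁ ξ₂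
        + (P (curvA L nb ξ₀ ξ₁) (Am ξ₂) - P (curvA L nb ξ₀ ξ₂) (Am ξ₁)
            + P (curvA L nb ξ₁ ξ₂) (Am ξ₀))
        + algebraMap ℂ O (1/2) *
            (P (covD L nb Am ξ₀ ξ₁) (Am ξ₂) - P (covD L nb Am ξ₀ ξ₂) (Am ξ₁)
              + P (covD L nb Am ξ₁ ξ₂) (Am ξ₀))
        + algebraMap ℂ O (1/6) *
            (2 * (P (L.bracket (Am ξ₀) (Am ξ₁)) (Am ξ₂)
                - P (L.bracket (Am ξ₀) (Am ξ₂)) (Am ξ₁)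
                + P (L.bracket (Am ξ₁) (Am ξ₂)) (Am ξ₀))) := by
  intro ξ₀ ξ₁ ξ₂
  have hderiv_pair (ξ η ζ : Vec O) := apply_pair_eq_of_anchor_eq_zero L P P_symm P_invar nb hconn
    (hAm_g η) (hAm_g ζ) ξ
  rw [one_sixth_mul_alternation_pair_bracket L P P_symm P_invar (hAm_g ξ₀) (hAm_g ξ₁) (hAm_g ξ₂)]
  simp only [liftedConn_eq P P_symm, modelPair, modelBracket, curvA, covD, map_neg, map_add,
    map_sub, LinearMap.add_apply, LinearMap.sub_apply, Derivation.leibniz,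
    Derivation.map_algebraMap, smul_eq_mul, hderiv_pair]
  linear_combination (-(P (L.bracket (nb ξ₀) (Am ξ₁)) (Am ξ₂)
      - P (L.bracket (nb ξ₁) (Am ξ₀)) (Am ξ₂) + P (L.bracket (nb ξ₂) (Am ξ₀)) (Am ξ₁)))
    * algebraMap_one_div_ofNat_mul (K := ℂ) (R := O) 2

/-- with `dH = (1/2)⟨c(∇) ∧ c(∇)⟩`, let `∇' = ∇ + A'` be another
connection and `∇̂'` the induced connection on `Â_{∇,H}`.  Then its relative
curvature `c_rel(∇̂')(ξ₀,ξ₁)(ξ₂) = ⟨[∇̂'ξ₀, ∇̂'ξ₁], ∇̂'ξ₂⟩` equals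
`H + ⟨c(∇) ∧ A'⟩ + (1/2)⟨[∇,A'] ∧ A'⟩ + (1/6)⟨[A',A'] ∧ A'⟩`. -/
theorem relative_curvature_change_of_connection
    (O : Type*) [CommRing O] [Algebra ℂ O]
    (A : Type*) [AddCommGroup A] [Module O A]
    (L : LieAlgebroid O A)
    (hsurj : Function.Surjective L.anchor)
    (P : A →ₗ[O] A →ₗ[O] O)
    (P_symm : ∀ a b, P a b = P b a)
    (P_invar : ∀ a b c : A, L.anchor b = 0 → L.anchor c = 0 →
      L.anchor a (P b c) = P (L.bracket a b) c + P b (L.bracket a c))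
    (nb : Vec O →ₗ[O] A)
    (hconn : ∀ ξ, L.anchor (nb ξ) = ξ)
    (H : Vec O → Vec O → Vec O → O) (hH : IsForm3 H)
    (hdH : ∀ ξ₀ ξ₁ ξ₂ ξ₃ : Vec O,
      koszulD3 H ξ₀ ξ₁ ξ₂ ξ₃ = algebraMap ℂ O (1/2) * pontForm L P nb ξ₀ ξ₁ ξ₂ ξ₃)
    (Am : Vec O → A)
    (hAm_add : ∀ ξ η, Am (ξ + η) = Am ξ + Am η)
    (hAm_smul : ∀ (f : O) ξ, Am (f • ξ) = f • Am ξ)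
    (hAm_g : ∀ ξ, L.anchor (Am ξ) = 0) :
    ∀ ξ₀ ξ₁ ξ₂ : Vec O,
      modelPair P (modelBracket L P nb H (liftedConn P Am ξ₀) (liftedConn P Am ξ₁))
        (liftedConn P Am ξ₂)
      = H ξ₀ ξ₁ ξ₂
        + (P (curvA L nb ξ₀ ξ₁) (Am ξ₂) - P (curvA L nb ξ₀ ξ₂) (Am ξ₁)
            + P (curvA L nb ξ₁ ξ₂) (Am ξ₀))
        + algebraMap ℂ O (1/2) *
            (P (covD L nb Am ξ₀ ξ₁) (Am ξ₂) - P (covD L nb Am ξ₀ ξ₂) (Am ξ₁)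
              + P (covD L nb Am ξ₁ ξ₂) (Am ξ₀))
        + algebraMap ℂ O (1/6) *
            (2 * (P (L.bracket (Am ξ₀) (Am ξ₁)) (Am ξ₂)
                - P (L.bracket (Am ξ₀) (Am ξ₂)) (Am ξ₁)
                + P (L.bracket (Am ξ₁) (Am ξ₂)) (Am ξ₀))) :=
  relative_curvature_change_of_connection_general O A L P P_symm P_invar nb hconn H Am hAm_g
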